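/- Let φ : ℂ^{m+1}\{0} → ℝ be smooth, scaling-invariant, G-invariant and g-admissible. Then for all real numbers x_1,…,x_m > 0, (φ−ψ)(1,x_1,…,x_k,x_{k+1},…,x_m) ≥ (φ−ψ)(1,…,1,ν,…,ν), where the value 1 occupies the first k+1 coordinates, ν = (x_{k+1}⋯x_m)^{1/(m−k)} / (x_1⋯x_k)^{1/(k+1)} occupies the last m−k coordinates. -/

import Mathlib

open Complex MeasureTheory Finset

noncomputable section

/-- Squared norm of a complex vector. -/
def nsq {n : ℕ} (z : Fin n → ℂ) : ℝ := ∑ i, ‖z i‖ ^ 2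

/-- Laplacian at a point of a real-valued function of one complex variable. -/
def lap (f : ℂ → ℝ) (t : ℂ) : ℝ :=
  lineDeriv ℝ (fun s => lineDeriv ℝ f s 1) t 1 +
  lineDeriv ℝ (fun s => lineDeriv ℝ f s Complex.I) t Complex.I

def psi1 (m k : ℕ) (z : Fin (m + 1) → ℂ) : ℝ :=
  Real.log ((∏ i ∈ Finset.univ.filter (fun i : Fin (m + 1) => (i : ℕ) ≤ k),
      ‖z i‖) ^ (2 * ((m : ℝ) + 1) / ((k : ℝ) + 1)) /
    nsq z ^ ((m : ℝ) + 1))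

def psi2 (m k : ℕ) (z : Fin (m + 1) → ℂ) : ℝ :=
  Real.log ((∏ i ∈ Finset.univ.filter (fun i : Fin (m + 1) => k + 1 ≤ (i : ℕ)),
      ‖z i‖) ^ (2 * ((m : ℝ) + 1) / ((m : ℝ) - (k : ℝ))) /
    nsq z ^ ((m : ℝ) + 1))

def psi (m k : ℕ) (z : Fin (m + 1) → ℂ) : ℝ := min (psi1 m k z) (psi2 m k z)

/-- Scaling invariance: φ descends to projective space. -/
def ScalInv (m : ℕ) (φ : (Fin (m + 1) → ℂ) → ℝ) : Prop :=
  ∀ lam : ℂ, lam ≠ 0 → ∀ z : Fin (m + 1) → ℂ, φ (lam • z) = φ z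

/-- Invariance under the group G. -/
def GInv (m k : ℕ) (φ : (Fin (m + 1) → ℂ) → ℝ) : Prop :=
  (∀ i j : Fin (m + 1), (i : ℕ) ≤ k → (j : ℕ) ≤ k →
      ∀ z : Fin (m + 1) → ℂ, φ (z ∘ Equiv.swap i j) = φ z) ∧
  (∀ p q : Fin (m + 1), k + 1 ≤ (p : ℕ) → k + 1 ≤ (q : ℕ) →
      ∀ z : Fin (m + 1) → ℂ, φ (z ∘ Equiv.swap p q) = φ z) ∧
  (∀ l : Fin (m + 1), ∀ θ : ℝ, ∀ z : Fin (m + 1) → ℂ,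
      φ (Function.update z l (Complex.exp ((θ : ℂ) * Complex.I) * z l)) = φ z)

/-- g-admissibility: positivity of g + i∂∂̄φ expressed along complex lines. -/
def Adm (m : ℕ) (φ : (Fin (m + 1) → ℂ) → ℝ) : Prop :=
  ∀ z : Fin (m + 1) → ℂ, z ≠ 0 → ∀ w : Fin (m + 1) → ℂ, (∀ c : ℂ, w ≠ c • z) →
    0 < lap (fun t : ℂ => ((m : ℝ) + 1) * Real.log (nsq (z + t • w)) + φ (z + t • w)) 0



lemma nsq_eq_normSq {n : ℕ} (z : Fin n → ℂ) : nsq z = ∑ i, Complex.normSq (z i) := by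
  simp [nsq, Complex.sq_norm]

lemma contDiff_nsq {n : ℕ} : ContDiff ℝ (⊤ : ℕ∞) (nsq : (Fin n → ℂ) → ℝ) := by
  have h : (nsq : (Fin n → ℂ) → ℝ) = fun z => ∑ i, ((z i).re * (z i).re + (z i).im * (z i).im) := by
    funext z
    rw [nsq_eq_normSq]
    simp [Complex.normSq_apply]
  rw [h]
  apply ContDiff.sum
  intro i _
  have hre : ContDiff ℝ (⊤ : ℕ∞) (fun z : Fin n → ℂ => (z i).re) :=
    Complex.reCLM.contDiff.comp (contDiff_apply ℝ ℂ i)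
  have him : ContDiff ℝ (⊤ : ℕ∞) (fun z : Fin n → ℂ => (z i).im) :=
    Complex.imCLM.contDiff.comp (contDiff_apply ℝ ℂ i)
  exact (hre.mul hre).add (him.mul him)

lemma nsq_pos {n : ℕ} {z : Fin n → ℂ} (hz : z ≠ 0) : 0 < nsq z := by
  obtain ⟨j, hj⟩ : ∃ j, z j ≠ 0 := by
    by_contra h
    push_neg at h
    exact hz (funext h)
  unfold nsq
  apply Finset.sum_pos' (fun i _ => by positivity)
  refine ⟨j, Finset.mem_univ j, ?_⟩
  have : ‖z j‖ ≠ 0 := by simpa using hj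
  positivity

lemma nsq_smul {n : ℕ} (c : ℂ) (z : Fin n → ℂ) : nsq (c • z) = ‖c‖ ^ 2 * nsq z := by
  simp only [nsq, Pi.smul_apply, smul_eq_mul, norm_mul, mul_pow, Finset.mul_sum]


section Core
variable {m : ℕ} {φ : (Fin (m+1) → ℂ) → ℝ}

def Phi (m : ℕ) (φ : (Fin (m+1) → ℂ) → ℝ) : (Fin (m+1) → ℂ) → ℝ :=
  fun z => ((m:ℝ)+1) * Real.log (nsq z) + φ z

lemma contDiffOn_Phi (hsm : ContDiffOn ℝ (⊤ : ℕ∞) φ {z | z ≠ 0}) :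
    ContDiffOn ℝ (⊤ : ℕ∞) (Phi m φ) {z | z ≠ 0} := by
  apply ContDiffOn.add _ hsm
  apply ContDiffOn.mul contDiffOn_const
  exact (contDiff_nsq.contDiffOn).log (fun z hz => (nsq_pos hz).ne')

def Dphi (m : ℕ) (φ : (Fin (m+1) → ℂ) → ℝ) : (Fin (m+1) → ℂ) → ((Fin (m+1) → ℂ) →L[ℝ] ℝ) :=
  fun z => fderiv ℝ (Phi m φ) z

def D2 (m : ℕ) (φ : (Fin (m+1) → ℂ) → ℝ) :
    (Fin (m+1) → ℂ) → ((Fin (m+1) → ℂ) →L[ℝ] ((Fin (m+1) → ℂ) →L[ℝ] ℝ)) :=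
  fun z => fderiv ℝ (Dphi m φ) z

lemma contDiffOn_Dphi (hsm : ContDiffOn ℝ (⊤ : ℕ∞) φ {z | z ≠ 0}) :
    ContDiffOn ℝ (⊤ : ℕ∞) (Dphi m φ) {z | z ≠ 0} :=
  (contDiffOn_Phi hsm).fderiv_of_isOpen isOpen_ne (by simp)

lemma hasFDerivAt_Phi (hsm : ContDiffOn ℝ (⊤ : ℕ∞) φ {z | z ≠ 0}) {z : Fin (m+1) → ℂ} (hz : z ≠ 0) :
    HasFDerivAt (Phi m φ) (Dphi m φ z) z :=
  (((contDiffOn_Phi hsm).differentiableOn (by simp)).differentiableAt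
    (isOpen_ne.mem_nhds hz)).hasFDerivAt

lemma hasFDerivAt_Dphi (hsm : ContDiffOn ℝ (⊤ : ℕ∞) φ {z | z ≠ 0}) {z : Fin (m+1) → ℂ} (hz : z ≠ 0) :
    HasFDerivAt (Dphi m φ) (D2 m φ z) z :=
  (((contDiffOn_Dphi hsm).differentiableOn (by simp)).differentiableAt
    (isOpen_ne.mem_nhds hz)).hasFDerivAt

lemma curve_deriv1 (hsm : ContDiffOn ℝ (⊤ : ℕ∞) φ {z | z ≠ 0}) {γ γ1 : ℝ → (Fin (m+1) → ℂ)} {s : ℝ}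
    (hne : γ s ≠ 0) (h1 : HasDerivAt γ (γ1 s) s) :
    HasDerivAt (fun r => Phi m φ (γ r)) (Dphi m φ (γ s) (γ1 s)) s :=
  (hasFDerivAt_Phi hsm hne).comp_hasDerivAt s h1

lemma curve_deriv2 (hsm : ContDiffOn ℝ (⊤ : ℕ∞) φ {z | z ≠ 0}) {γ γ1 γ2 : ℝ → (Fin (m+1) → ℂ)} {s : ℝ}
    (hne : γ s ≠ 0) (h1 : HasDerivAt γ (γ1 s) s) (h2 : HasDerivAt γ1 (γ2 s) s) :
    HasDerivAt (fun r => Dphi m φ (γ r) (γ1 r))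
      (D2 m φ (γ s) (γ1 s) (γ1 s) + Dphi m φ (γ s) (γ2 s)) s :=
  HasDerivAt.clm_apply ((hasFDerivAt_Dphi hsm hne).comp_hasDerivAt s h1) h2

lemma lineDeriv_line (hsm : ContDiffOn ℝ (⊤ : ℕ∞) φ {z | z ≠ 0}) {z w : Fin (m+1) → ℂ} {p u : ℂ}
    (hp : z + p • w ≠ 0) :
    lineDeriv ℝ (fun τ : ℂ => Phi m φ (z + τ • w)) p u = Dphi m φ (z + p • w) (u • w) := by
  have harg : ∀ r : ℝ, z + (p + r • u) • w = (z + p • w) + r • (u • w) := by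
    intro r
    rw [add_smul, smul_assoc, add_assoc]
  have hfun : (fun r : ℝ => (fun τ : ℂ => Phi m φ (z + τ • w)) (p + r • u)) =
      (fun r : ℝ => Phi m φ ((z + p • w) + r • (u • w))) := by
    funext r
    show Phi m φ (z + (p + r • u) • w) = _
    rw [harg r]
  have hcurve : ∀ r : ℝ, HasDerivAt (fun r : ℝ => (z + p • w) + r • (u • w)) (u • w) r := by
    intro r
    simpa using ((hasDerivAt_id r).smul_const (u • w)).const_add (z + p • w)
  have hd : HasDerivAt (fun r : ℝ => Phi m φ ((z + p • w) + r • (u • w)))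
      (Dphi m φ (z + p • w) (u • w)) 0 := by
    have := curve_deriv1 hsm (γ := fun r : ℝ => (z + p • w) + r • (u • w))
      (γ1 := fun _ => u • w) (s := 0) (by simpa using hp) (hcurve 0)
    simpa using this
  show deriv (fun r : ℝ => (fun τ : ℂ => Phi m φ (z + τ • w)) (p + r • u)) 0 = _
  rw [hfun]
  exact hd.deriv

set_option maxHeartbeats 1000000 in
lemma lap_line (hsm : ContDiffOn ℝ (⊤ : ℕ∞) φ {z | z ≠ 0}) {z w : Fin (m+1) → ℂ} (hz : z ≠ 0) :
    lap (fun τ : ℂ => Phi m φ (z + τ • w)) 0 =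
      D2 m φ z w w + D2 m φ z (Complex.I • w) (Complex.I • w) := by
  have main : ∀ u : ℂ, lineDeriv ℝ (fun σ : ℂ => lineDeriv ℝ
      (fun τ : ℂ => Phi m φ (z + τ • w)) σ u) 0 u = D2 m φ z (u • w) (u • w) := by
    intro u
    have hev : (fun r : ℝ => lineDeriv ℝ (fun τ : ℂ => Phi m φ (z + τ • w)) ((0:ℂ) + r • u) u)
        =ᶠ[nhds (0:ℝ)] (fun r : ℝ => Dphi m φ (z + r • (u • w)) (u • w)) := by
      have hcont : ContinuousAt (fun r : ℝ => z + r • (u • w)) 0 :=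
        (continuous_const.add (continuous_id.smul continuous_const)).continuousAt
      have hmem : {y : Fin (m+1) → ℂ | y ≠ 0} ∈ nhds ((fun r : ℝ => z + r • (u • w)) 0) := by
        simpa using isOpen_ne.mem_nhds hz
      filter_upwards [hcont.eventually_mem hmem] with r hr
      have hr' : z + ((0:ℂ) + r • u) • w = z + r • (u • w) := by
        rw [zero_add, smul_assoc]
      rw [show ((0:ℂ) + r • u) = ((r • u : ℂ)) by rw [zero_add]]
      rw [lineDeriv_line hsm (p := ((r:ℝ) • u : ℂ)) (by rw [smul_assoc]; exact hr)]
      congr 1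
      rw [smul_assoc]
    have hd : HasDerivAt (fun r : ℝ => Dphi m φ (z + r • (u • w)) (u • w))
        (D2 m φ z (u • w) (u • w)) 0 := by
      have hcurve : HasDerivAt (fun r : ℝ => z + r • (u • w)) (u • w) 0 := by
        simpa using ((hasDerivAt_id (0:ℝ)).smul_const (u • w)).const_add z
      have hz0 : z + (0:ℝ) • (u • w) ≠ 0 := by simpa using hz
      have := HasDerivAt.clm_apply
        ((hasFDerivAt_Dphi hsm (z := z + (0:ℝ) • (u • w)) hz0).comp_hasDerivAt 0 hcurve)
        (hasDerivAt_const (0:ℝ) (u • w))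
      simpa using this
    show deriv (fun r : ℝ => lineDeriv ℝ (fun τ : ℂ => Phi m φ (z + τ • w)) ((0:ℂ) + r • u) u) 0 = _
    rw [hev.deriv_eq]
    exact hd.deriv
  have h1 := main 1
  have hI := main Complex.I
  rw [one_smul] at h1
  rw [lap, h1, hI]

lemma phase_inv {k : ℕ} (hG : GInv m k φ) (θ : Fin (m+1) → ℝ) (z : Fin (m+1) → ℂ) :
    φ (fun j => Complex.exp ((θ j : ℂ) * Complex.I) * z j) = φ z := by
  have main : ∀ S : Finset (Fin (m+1)),
      φ (fun j => if j ∈ S then Complex.exp ((θ j : ℂ) * Complex.I) * z j else z j) = φ z := by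
    intro S
    induction S using Finset.induction_on with
    | empty => simp
    | @insert a S ha IH =>
      have hupd : (fun j => if j ∈ insert a S then Complex.exp ((θ j : ℂ) * Complex.I) * z j
            else z j) = Function.update
            (fun j => if j ∈ S then Complex.exp ((θ j : ℂ) * Complex.I) * z j else z j) a
            (Complex.exp ((θ a : ℂ) * Complex.I) *
              (fun j => if j ∈ S then Complex.exp ((θ j : ℂ) * Complex.I) * z j else z j) a) := by
        funext j
        by_cases hj : j = a
        · subst hj
          simp [ha]
        · simp [Function.update_of_ne hj, Finset.mem_insert, hj]
      rw [hupd, hG.2.2 a (θ a) _, IH]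
  have := main Finset.univ
  simpa using this

lemma ecoord_hasDerivAt (aj bj : ℂ) (s : ℝ) :
    HasDerivAt (fun r : ℝ => Complex.exp (aj + r • bj)) (bj * Complex.exp (aj + s • bj)) s := by
  have hin : HasDerivAt (fun r : ℝ => aj + r • bj) bj s := by
    simpa using ((hasDerivAt_id s).smul_const bj).const_add aj
  have := (Complex.hasDerivAt_exp (aj + s • bj)).scomp s (hh := hin)
  simpa [smul_eq_mul, Function.comp_def] using this

lemma ecurve_ne_zero (a : Fin (m+1) → ℂ) : (fun j => Complex.exp (a j)) ≠ 0 := by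
  intro h
  have := congrFun h 0
  exact Complex.exp_ne_zero (a 0) (by simpa using this)

lemma exp_hasDerivAt_1 (hsm : ContDiffOn ℝ (⊤ : ℕ∞) φ {z | z ≠ 0}) (a b : Fin (m+1) → ℂ) (s : ℝ) :
    HasDerivAt (fun r : ℝ => Phi m φ (fun j => Complex.exp (a j + r • b j)))
      (Dphi m φ (fun j => Complex.exp (a j + s • b j))
        (fun j => b j * Complex.exp (a j + s • b j))) s :=
  curve_deriv1 hsm (γ := fun r => fun j => Complex.exp (a j + r • b j))
    (γ1 := fun r => fun j => b j * Complex.exp (a j + r • b j))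
    (ecurve_ne_zero _) (hasDerivAt_pi.2 fun j => ecoord_hasDerivAt (a j) (b j) s)

lemma exp_hasDerivAt_2 (hsm : ContDiffOn ℝ (⊤ : ℕ∞) φ {z | z ≠ 0}) (a b : Fin (m+1) → ℂ) (s : ℝ) :
    HasDerivAt (fun r : ℝ => Dphi m φ (fun j => Complex.exp (a j + r • b j))
        (fun j => b j * Complex.exp (a j + r • b j)))
      (D2 m φ (fun j => Complex.exp (a j + s • b j))
          (fun j => b j * Complex.exp (a j + s • b j))
          (fun j => b j * Complex.exp (a j + s • b j)) +
        Dphi m φ (fun j => Complex.exp (a j + s • b j))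
          (fun j => b j * (b j * Complex.exp (a j + s • b j)))) s :=
  curve_deriv2 hsm (γ := fun r => fun j => Complex.exp (a j + r • b j))
    (γ1 := fun r => fun j => b j * Complex.exp (a j + r • b j))
    (γ2 := fun r => fun j => b j * (b j * Complex.exp (a j + r • b j)))
    (ecurve_ne_zero _) (hasDerivAt_pi.2 fun j => ecoord_hasDerivAt (a j) (b j) s)
    (hasDerivAt_pi.2 fun j => (ecoord_hasDerivAt (a j) (b j) s).const_mul (b j))

lemma Phi_phase {k : ℕ} (hG : GInv m k φ) (a : Fin (m+1) → ℂ) (v : Fin (m+1) → ℝ) (y : ℝ) :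
    Phi m φ (fun j => Complex.exp (a j + y • ((v j : ℂ) * Complex.I))) =
      Phi m φ (fun j => Complex.exp (a j)) := by
  have hfun : (fun j => Complex.exp (a j + y • ((v j : ℂ) * Complex.I))) =
      (fun j => Complex.exp (((y * v j : ℝ) : ℂ) * Complex.I) * Complex.exp (a j)) := by
    funext j
    rw [← Complex.exp_add]
    congr 1
    push_cast
    rw [Complex.real_smul]
    ring
  have hnsq : nsq (fun j => Complex.exp (a j + y • ((v j : ℂ) * Complex.I))) =
      nsq (fun j => Complex.exp (a j)) := by
    unfold nsq
    congr 1
    funext j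
    rw [Complex.norm_exp, Complex.norm_exp]
    congr 1
    simp [Complex.add_re, Complex.smul_re]
  have hphi : φ (fun j => Complex.exp (a j + y • ((v j : ℂ) * Complex.I))) =
      φ (fun j => Complex.exp (a j)) := by
    rw [hfun]
    exact phase_inv hG (fun j => y * v j) (fun j => Complex.exp (a j))
  unfold Phi
  rw [hnsq, hphi]

lemma vertical {k : ℕ} (hsm : ContDiffOn ℝ (⊤ : ℕ∞) φ {z | z ≠ 0}) (hG : GInv m k φ)
    (a : Fin (m+1) → ℂ) (v : Fin (m+1) → ℝ) :
    D2 m φ (fun j => Complex.exp (a j))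
        (fun j => (v j : ℂ) * Complex.I * Complex.exp (a j))
        (fun j => (v j : ℂ) * Complex.I * Complex.exp (a j)) =
      Dphi m φ (fun j => Complex.exp (a j))
        (fun j => (v j : ℂ) ^ 2 * Complex.exp (a j)) := by
  set b : Fin (m+1) → ℂ := fun j => (v j : ℂ) * Complex.I with hb
  -- the function y ↦ Dphi (γ y) (γ1 y) is identically 0
  have hzero : ∀ y : ℝ, Dphi m φ (fun j => Complex.exp (a j + y • b j))
      (fun j => b j * Complex.exp (a j + y • b j)) = 0 := by
    intro y
    have h1 := exp_hasDerivAt_1 hsm a b y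
    have hconst : (fun r : ℝ => Phi m φ (fun j => Complex.exp (a j + r • b j))) =
        (fun _ : ℝ => Phi m φ (fun j => Complex.exp (a j))) := by
      funext r
      exact Phi_phase hG a v r
    rw [hconst] at h1
    exact h1.unique (hasDerivAt_const y _)
  have h2 := exp_hasDerivAt_2 hsm a b 0
  have hzf : (fun r : ℝ => Dphi m φ (fun j => Complex.exp (a j + r • b j))
      (fun j => b j * Complex.exp (a j + r • b j))) = (fun _ : ℝ => (0 : ℝ)) := by
    funext r
    exact hzero r
  rw [hzf] at h2
  have h3 := h2.unique (hasDerivAt_const 0 _)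
  -- h3 : D2 ... + Dphi ... = 0  at s = 0
  have e0 : ∀ j, a j + (0:ℝ) • b j = a j := by intro j; simp
  have hD2arg : (fun j => b j * Complex.exp (a j + (0:ℝ) • b j)) =
      (fun j => (v j : ℂ) * Complex.I * Complex.exp (a j)) := by
    funext j; rw [e0 j]
  have hbase : (fun j => Complex.exp (a j + (0:ℝ) • b j)) = (fun j => Complex.exp (a j)) := by
    funext j; rw [e0 j]
  have hw2 : (fun j => b j * (b j * Complex.exp (a j + (0:ℝ) • b j))) =
      (fun j => -((v j : ℂ) ^ 2 * Complex.exp (a j))) := by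
    funext j
    rw [e0 j, hb]
    have : (v j : ℂ) * Complex.I * ((v j : ℂ) * Complex.I * Complex.exp (a j)) =
        ((v j : ℂ))^2 * (Complex.I * Complex.I) * Complex.exp (a j) := by ring
    rw [this, Complex.I_mul_I]
    ring
  rw [hbase, hD2arg, hw2] at h3
  have : Dphi m φ (fun j => Complex.exp (a j)) (fun j => -((v j : ℂ) ^ 2 * Complex.exp (a j))) =
      - Dphi m φ (fun j => Complex.exp (a j)) (fun j => (v j : ℂ) ^ 2 * Complex.exp (a j)) := by
    rw [show (fun j => -((v j : ℂ) ^ 2 * Complex.exp (a j))) =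
        -(fun j => (v j : ℂ) ^ 2 * Complex.exp (a j)) from rfl, map_neg]
  rw [this] at h3
  linarith [h3]

lemma deriv2_pos {k : ℕ} (hsm : ContDiffOn ℝ (⊤ : ℕ∞) φ {z | z ≠ 0}) (hG : GInv m k φ)
    (hadm : Adm m φ) (t v : Fin (m+1) → ℝ) (hv : ∃ j0 j1, v j0 ≠ v j1) (s : ℝ) :
    0 < deriv (deriv (fun r : ℝ =>
      Phi m φ (fun j => Complex.exp ((t j : ℂ) + r • (v j : ℂ))))) s := by
  set a : Fin (m+1) → ℂ := fun j => (t j : ℂ) with ha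
  set b : Fin (m+1) → ℂ := fun j => (v j : ℂ) with hbdef
  set z : Fin (m+1) → ℂ := fun j => Complex.exp (a j + s • b j) with hz
  set w : Fin (m+1) → ℂ := fun j => b j * Complex.exp (a j + s • b j) with hw
  have hzne : z ≠ 0 := ecurve_ne_zero _
  -- first derivative
  have hd1 : deriv (fun r : ℝ => Phi m φ (fun j => Complex.exp (a j + r • b j))) =
      (fun r : ℝ => Dphi m φ (fun j => Complex.exp (a j + r • b j))
        (fun j => b j * Complex.exp (a j + r • b j))) := by
    funext r
    exact (exp_hasDerivAt_1 hsm a b r).deriv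
  rw [hd1]
  have hd2 := (exp_hasDerivAt_2 hsm a b s).deriv
  rw [hd2]
  -- vertical identity at base point a + s • b
  have hvert := vertical hsm hG (fun j => a j + s • b j) v
  -- identify arguments
  have hIw : (fun j => (v j : ℂ) * Complex.I * Complex.exp (a j + s • b j)) =
      Complex.I • w := by
    funext j
    simp only [hw, Pi.smul_apply, smul_eq_mul]
    ring
  have hw2 : (fun j => b j * (b j * Complex.exp (a j + s • b j))) =
      (fun j => (v j : ℂ) ^ 2 * Complex.exp (a j + s • b j)) := by
    funext j
    rw [hbdef]
    ring_nf
  rw [hIw] at hvert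
  rw [hw2, ← hvert]
  -- now equal to lap of the line function
  have hlap := lap_line (w := w) hsm hzne
  rw [← hlap]
  -- apply admissibility
  have hwne : ∀ c : ℂ, w ≠ c • z := by
    intro c hc
    obtain ⟨j0, j1, hj⟩ := hv
    have h0 := congrFun hc j0
    have h1 := congrFun hc j1
    simp only [hw, hz, Pi.smul_apply, smul_eq_mul] at h0 h1
    have h0' : ((v j0 : ℂ)) * Complex.exp (a j0 + s • b j0) =
        c * Complex.exp (a j0 + s • b j0) := h0
    have h1' : ((v j1 : ℂ)) * Complex.exp (a j1 + s • b j1) =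
        c * Complex.exp (a j1 + s • b j1) := h1
    have e0 : (v j0 : ℂ) = c := mul_right_cancel₀ (Complex.exp_ne_zero _) h0'
    have e1 : (v j1 : ℂ) = c := mul_right_cancel₀ (Complex.exp_ne_zero _) h1'
    exact hj (by exact_mod_cast e0.trans e1.symm)
  have := hadm z hzne w hwne
  exact this

lemma Phi_smul (hscal : ScalInv m φ) {r : ℝ} (hr : 0 < r) {z : Fin (m+1) → ℂ} (hz : z ≠ 0) :
    Phi m φ ((r : ℂ) • z) = Phi m φ z + 2 * ((m:ℝ)+1) * Real.log r := by
  unfold Phi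
  rw [nsq_smul, hscal (r : ℂ) (by exact_mod_cast hr.ne') z]
  rw [Complex.norm_real, Real.norm_eq_abs, abs_of_pos hr]
  rw [Real.log_mul (by positivity) (nsq_pos hz).ne', Real.log_pow]
  push_cast
  ring

lemma convexOn_Fe {k : ℕ} (hsm : ContDiffOn ℝ (⊤ : ℕ∞) φ {z | z ≠ 0}) (hscal : ScalInv m φ)
    (hG : GInv m k φ) (hadm : Adm m φ) :
    ConvexOn ℝ Set.univ (fun t : Fin (m+1) → ℝ => Phi m φ (fun j => Complex.exp ((t j : ℂ)))) := by
  refine ⟨convex_univ, fun p _ q _ α β hα hβ hαβ => ?_⟩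
  set v : Fin (m+1) → ℝ := fun j => q j - p j with hvdef
  set h : ℝ → ℝ := fun s => Phi m φ (fun j => Complex.exp ((p j : ℂ) + s • (v j : ℂ))) with hhdef
  have key : ∀ t : Fin (m+1) → ℝ, ∀ s : ℝ, (∀ j, t j = p j + s * v j) →
      Phi m φ (fun j => Complex.exp ((t j : ℂ))) = h s := by
    intro t s ht
    simp only [hhdef]
    congr 1
    funext j
    rw [ht j]
    push_cast [Complex.real_smul]
    ring_nf
  have hconv : ConvexOn ℝ Set.univ h := by
    by_cases hv : ∃ j0 j1, v j0 ≠ v j1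
    · -- strictly convex direction
      have hdiff : ∀ s : ℝ, HasDerivAt h (Dphi m φ (fun j => Complex.exp ((p j:ℂ) + s • (v j:ℂ)))
          (fun j => (v j : ℂ) * Complex.exp ((p j:ℂ) + s • (v j:ℂ)))) s :=
        fun s => exp_hasDerivAt_1 hsm (fun j => (p j : ℂ)) (fun j => (v j : ℂ)) s
      have hd1 : deriv h = fun s => Dphi m φ (fun j => Complex.exp ((p j:ℂ) + s • (v j:ℂ)))
          (fun j => (v j : ℂ) * Complex.exp ((p j:ℂ) + s • (v j:ℂ))) := by
        funext s; exact (hdiff s).deriv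
      apply convexOn_of_deriv2_nonneg convex_univ
      · exact (Differentiable.continuous (fun s => (hdiff s).differentiableAt)).continuousOn
      · intro s _
        exact ((hdiff s).differentiableAt).differentiableWithinAt
      · intro s _
        rw [hd1]
        exact ((exp_hasDerivAt_2 hsm (fun j => (p j : ℂ)) (fun j => (v j : ℂ))
          s).differentiableAt).differentiableWithinAt
      · intro s _
        have h2 := deriv2_pos (k := k) hsm hG hadm p v hv s
        have : deriv^[2] h s = deriv (deriv h) s := by
          simp [Function.iterate_succ, Function.iterate_one]
        rw [this]
        exact le_of_lt h2
    · -- v is constant: h is affine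
      push_neg at hv
      set c : ℝ := v 0 with hcdef
      have hvc : ∀ j, v j = c := fun j => hv j 0
      have haff : ∀ s : ℝ, h s = Phi m φ (fun j => Complex.exp ((p j : ℂ))) +
          (2 * ((m:ℝ)+1) * c) * s := by
        intro s
        have harg : (fun j => Complex.exp ((p j:ℂ) + s • (v j:ℂ))) =
            ((Real.exp (s * c) : ℂ)) • (fun j => Complex.exp ((p j : ℂ))) := by
          funext j
          simp only [Pi.smul_apply, smul_eq_mul]
          rw [Complex.ofReal_exp, ← Complex.exp_add, hvc j]
          congr 1
          rw [Complex.real_smul]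
          push_cast
          ring
        simp only [hhdef]
        rw [harg, Phi_smul hscal (Real.exp_pos _) (ecurve_ne_zero _), Real.log_exp]
        ring
      refine ⟨convex_univ, fun x _ y _ a b ha hb hab => ?_⟩
      simp only [smul_eq_mul]
      rw [haff (a * x + b * y), haff x, haff y]
      set A := Phi m φ (fun j => Complex.exp ((p j : ℂ))) with hA
      apply le_of_eq
      linear_combination (-A) * hab
  -- use convexity of h between 0 and 1
  have h0 : Phi m φ (fun j => Complex.exp ((p j : ℂ))) = h 0 :=
    key p 0 (fun j => by ring)
  have h1 : Phi m φ (fun j => Complex.exp ((q j : ℂ))) = h 1 :=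
    key q 1 (fun j => by simp [hvdef])
  have hmid : Phi m φ (fun j => Complex.exp (((α • p + β • q) j : ℂ))) = h β := by
    apply key
    intro j
    have : α = 1 - β := by linarith
    simp only [Pi.add_apply, Pi.smul_apply, smul_eq_mul, hvdef, this]
    ring
  show Phi m φ (fun j => Complex.exp (((α • p + β • q) j : ℂ))) ≤
      α • Phi m φ (fun j => Complex.exp ((p j : ℂ))) + β • Phi m φ (fun j => Complex.exp ((q j : ℂ)))
  rw [hmid, h0, h1]
  have := hconv.2 (Set.mem_univ (0:ℝ)) (Set.mem_univ (1:ℝ)) hα hβ hαβ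
  simpa using this

lemma extendDomain_swap'' {n : ℕ} {P : Fin n → Prop} [DecidablePred P] (x y : {i : Fin n // P i}) :
    (Equiv.swap x y).extendDomain (Equiv.refl {i : Fin n // P i}) = Equiv.swap x.1 y.1 := by
  ext i
  by_cases hi : P i
  · rw [Equiv.Perm.extendDomain_apply_subtype _ _ hi]
    simp only [Equiv.refl_symm, Equiv.refl_apply]
    set u : {i : Fin n // P i} := ⟨i, hi⟩ with hu
    by_cases hx : u = x
    · have hix : i = x.1 := by rw [← hx]
      rw [hx, Equiv.swap_apply_left, hix, Equiv.swap_apply_left]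
    · by_cases hy : u = y
      · have hiy : i = y.1 := by rw [← hy]
        rw [hy, Equiv.swap_apply_right, hiy, Equiv.swap_apply_right]
      · rw [Equiv.swap_apply_of_ne_of_ne hx hy,
          Equiv.swap_apply_of_ne_of_ne (fun h => hx (Subtype.ext h))
            (fun h => hy (Subtype.ext h))]
  · rw [Equiv.Perm.extendDomain_apply_not_subtype _ _ hi,
      Equiv.swap_apply_of_ne_of_ne (fun h => hi (by rw [h]; exact x.2))
        (fun h => hi (by rw [h]; exact y.2))]

lemma perm_inv_of_swaps {P : Fin (m+1) → Prop} [DecidablePred P]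
    (hswap : ∀ i j : Fin (m+1), P i → P j → ∀ z : Fin (m+1) → ℂ, φ (z ∘ Equiv.swap i j) = φ z)
    (e : Equiv.Perm {i : Fin (m+1) // P i}) :
    ∀ z : Fin (m+1) → ℂ, φ (z ∘ (e.extendDomain (Equiv.refl _))) = φ z := by
  refine Equiv.Perm.swap_induction_on
    (motive := fun e : Equiv.Perm {i : Fin (m+1) // P i} =>
      ∀ z : Fin (m+1) → ℂ, φ (z ∘ (e.extendDomain (Equiv.refl _))) = φ z) e ?_ ?_
  · intro z
    rw [Equiv.Perm.extendDomain_one]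
    rfl
  · intro f x y hxy IH z
    rw [← Equiv.Perm.extendDomain_mul]
    have hcomp : z ∘ ⇑((Equiv.swap x y).extendDomain (Equiv.refl _) *
        f.extendDomain (Equiv.refl _)) =
        (z ∘ ⇑((Equiv.swap x y).extendDomain (Equiv.refl _))) ∘
          ⇑(f.extendDomain (Equiv.refl _)) := by
      funext j
      simp only [Function.comp_apply, Equiv.Perm.mul_apply]
    rw [hcomp, IH, extendDomain_swap'', hswap x.1 y.1 x.2 y.2]

lemma perm_sum_const {α : Type} [Fintype α] [DecidableEq α] (g : α → ℝ) (a0 : α) :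
    (Fintype.card α : ℝ) * ∑ e : Equiv.Perm α, g (e a0) =
      (Fintype.card (Equiv.Perm α) : ℝ) * ∑ b : α, g b := by
  classical
  have hfib : ∀ b b' : α, (Finset.univ.filter (fun e : Equiv.Perm α => e a0 = b)).card =
      (Finset.univ.filter (fun e : Equiv.Perm α => e a0 = b')).card := by
    intro b b'
    apply Finset.card_bij' (fun e _ => Equiv.swap b b' * e) (fun e _ => Equiv.swap b b' * e)
    · intro e he
      simp only [Finset.mem_filter, Finset.mem_univ, true_and] at he ⊢
      rw [Equiv.Perm.mul_apply, he, Equiv.swap_apply_left]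
    · intro e he
      simp only [Finset.mem_filter, Finset.mem_univ, true_and] at he ⊢
      rw [Equiv.Perm.mul_apply, he, Equiv.swap_apply_right]
    · intro e _
      rw [← mul_assoc, Equiv.swap_mul_self, one_mul]
    · intro e _
      rw [← mul_assoc, Equiv.swap_mul_self, one_mul]
  set c : ℕ := (Finset.univ.filter (fun e : Equiv.Perm α => e a0 = a0)).card with hc
  have hsum : ∑ e : Equiv.Perm α, g (e a0) = (c : ℝ) * ∑ b : α, g b := by
    rw [← Finset.sum_fiberwise_of_maps_to (fun (e : Equiv.Perm α) (_ : e ∈ Finset.univ) =>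
      Finset.mem_univ (e a0)) (fun e => g (e a0))]
    rw [Finset.mul_sum]
    apply Finset.sum_congr rfl
    intro b _
    have : ∀ e ∈ Finset.univ.filter (fun e : Equiv.Perm α => e a0 = b), g (e a0) = g b := by
      intro e he
      simp only [Finset.mem_filter] at he
      rw [he.2]
    rw [Finset.sum_congr rfl this, Finset.sum_const, hfib b a0]
    simp [hc, mul_comm]
  have hcard : Fintype.card (Equiv.Perm α) = Fintype.card α * c := by
    have := Finset.card_eq_sum_card_fiberwise (fun (e : Equiv.Perm α) (_ : e ∈ Finset.univ) =>
      Finset.mem_univ (e a0))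
    rw [show Fintype.card (Equiv.Perm α) = Finset.univ.card from rfl, this]
    have : ∀ b ∈ Finset.univ, (Finset.univ.filter (fun e : Equiv.Perm α => e a0 = b)).card = c :=
      fun b _ => hfib b a0
    rw [Finset.sum_congr rfl this, Finset.sum_const, Fintype.card, smul_eq_mul]
  rw [hsum, hcard]
  push_cast
  ring

abbrev PermPair (m k : ℕ) : Type :=
  Equiv.Perm {i : Fin (m+1) // (i:ℕ) ≤ k} × Equiv.Perm {i : Fin (m+1) // ¬((i:ℕ) ≤ k)}

def bigSigma (m k : ℕ) (ef : PermPair m k) : Equiv.Perm (Fin (m+1)) :=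
  ef.1.extendDomain (Equiv.refl _) * ef.2.extendDomain (Equiv.refl _)

lemma bigSigma_apply_le {k : ℕ} (ef : PermPair m k) {i : Fin (m+1)} (hi : (i:ℕ) ≤ k) :
    bigSigma m k ef i = (ef.1 ⟨i, hi⟩).1 := by
  unfold bigSigma
  rw [Equiv.Perm.mul_apply]
  have h2 : (ef.2.extendDomain (Equiv.refl {i : Fin (m+1) // ¬((i:ℕ) ≤ k)})) i = i :=
    Equiv.Perm.extendDomain_apply_not_subtype ef.2 (Equiv.refl _) (not_not_intro hi)
  rw [h2, Equiv.Perm.extendDomain_apply_subtype ef.1 (Equiv.refl _) hi]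
  simp

lemma bigSigma_apply_gt {k : ℕ} (ef : PermPair m k) {i : Fin (m+1)} (hi : ¬((i:ℕ) ≤ k)) :
    bigSigma m k ef i = (ef.2 ⟨i, hi⟩).1 := by
  unfold bigSigma
  rw [Equiv.Perm.mul_apply, Equiv.Perm.extendDomain_apply_subtype ef.2 (Equiv.refl _) hi]
  simp only [Equiv.refl_symm, Equiv.refl_apply]
  exact Equiv.Perm.extendDomain_apply_not_subtype ef.1 (Equiv.refl _) (ef.2 ⟨i, hi⟩).2

lemma bigSigma_mem {k : ℕ} (ef : PermPair m k) (i : Fin (m+1)) :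
    ((bigSigma m k ef i : ℕ) ≤ k) ↔ ((i:ℕ) ≤ k) := by
  by_cases hi : (i:ℕ) ≤ k
  · rw [bigSigma_apply_le ef hi]
    exact ⟨fun _ => hi, fun _ => (ef.1 ⟨i, hi⟩).2⟩
  · rw [bigSigma_apply_gt ef hi]
    exact ⟨fun h => absurd h (ef.2 ⟨i, hi⟩).2, fun h => absurd h hi⟩

lemma phi_bigSigma {k : ℕ} (hG : GInv m k φ) (ef : PermPair m k) (z : Fin (m+1) → ℂ) :
    φ (z ∘ (bigSigma m k ef)) = φ z := by
  have hcomp : z ∘ ⇑(bigSigma m k ef) =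
      (z ∘ ⇑(ef.1.extendDomain (Equiv.refl _))) ∘ ⇑(ef.2.extendDomain (Equiv.refl _)) := by
    funext j
    simp only [bigSigma, Function.comp_apply, Equiv.Perm.mul_apply]
  rw [hcomp]
  have h2 := perm_inv_of_swaps (P := fun i : Fin (m+1) => ¬((i:ℕ) ≤ k))
    (fun i j hi hj z' => hG.2.1 i j (by omega) (by omega) z') ef.2
    (z ∘ ⇑(ef.1.extendDomain (Equiv.refl _)))
  rw [h2]
  exact perm_inv_of_swaps (P := fun i : Fin (m+1) => (i:ℕ) ≤ k) hG.1 ef.1 z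

lemma Phi_bigSigma {k : ℕ} (hG : GInv m k φ) (ef : PermPair m k) (u : Fin (m+1) → ℂ) :
    Phi m φ (u ∘ (bigSigma m k ef)) = Phi m φ u := by
  unfold Phi
  have hnsq : nsq (u ∘ (bigSigma m k ef)) = nsq u := by
    unfold nsq
    exact Equiv.sum_comp (bigSigma m k ef) (fun i => ‖u i‖ ^ 2)
  rw [hnsq, phi_bigSigma hG ef u]

def Vfun (m k : ℕ) (φ : (Fin (m+1) → ℂ) → ℝ) : (Fin (m+1) → ℝ) → ℝ :=
  fun t => Phi m φ (fun j => Complex.exp ((t j : ℂ))) -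
    (2*((m:ℝ)+1)/((k:ℝ)+1)) *
      ∑ i ∈ Finset.univ.filter (fun i : Fin (m+1) => (i:ℕ) ≤ k), t i

lemma Vfun_bigSigma {k : ℕ} (hG : GInv m k φ) (ef : PermPair m k) (t : Fin (m+1) → ℝ) :
    Vfun m k φ (fun i => t (bigSigma m k ef i)) = Vfun m k φ t := by
  unfold Vfun
  have hPhi : Phi m φ (fun j => Complex.exp ((t (bigSigma m k ef j) : ℂ))) =
      Phi m φ (fun j => Complex.exp ((t j : ℂ))) := by
    have : (fun j => Complex.exp ((t (bigSigma m k ef j) : ℂ))) =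
        (fun j => Complex.exp ((t j : ℂ))) ∘ (bigSigma m k ef) := rfl
    rw [this, Phi_bigSigma hG ef]
  have hsum : ∑ i ∈ Finset.univ.filter (fun i : Fin (m+1) => (i:ℕ) ≤ k), t (bigSigma m k ef i) =
      ∑ i ∈ Finset.univ.filter (fun i : Fin (m+1) => (i:ℕ) ≤ k), t i := by
    apply Finset.sum_equiv (bigSigma m k ef)
    · intro i
      simp only [Finset.mem_filter, Finset.mem_univ, true_and]
      exact (bigSigma_mem ef i).symm
    · intro i _
      rfl
  rw [hPhi, hsum]

lemma convexOn_Vfun {k : ℕ} (hsm : ContDiffOn ℝ (⊤ : ℕ∞) φ {z | z ≠ 0}) (hscal : ScalInv m φ)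
    (hG : GInv m k φ) (hadm : Adm m φ) : ConvexOn ℝ Set.univ (Vfun m k φ) := by
  have heq : Vfun m k φ = fun t => (Phi m φ (fun j => Complex.exp ((t j : ℂ)))) +
      (-(2*((m:ℝ)+1)/((k:ℝ)+1))) *
        ∑ i ∈ Finset.univ.filter (fun i : Fin (m+1) => (i:ℕ) ≤ k), t i := by
    funext t
    unfold Vfun
    ring
  rw [heq]
  apply ConvexOn.add (convexOn_Fe hsm hscal hG hadm)
  refine ⟨convex_univ, fun p _ q _ a b _ _ hab => le_of_eq ?_⟩
  simp only [Pi.add_apply, Pi.smul_apply, smul_eq_mul]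
  rw [Finset.sum_add_distrib, ← Finset.mul_sum, ← Finset.mul_sum]
  ring

lemma cancel_helper1 (a b C S : ℝ) (ha : a ≠ 0) (hb : b ≠ 0) :
    b * ((a * b)⁻¹ * (a * S / C)) = S / C := by
  rw [mul_inv]
  have : b * (a⁻¹ * b⁻¹ * (a * S / C)) = (a * a⁻¹) * ((b * b⁻¹) * (S / C)) := by ring
  rw [this, mul_inv_cancel₀ ha, mul_inv_cancel₀ hb, one_mul, one_mul]

lemma cancel_helper2 (a b C S : ℝ) (ha : a ≠ 0) (hb : b ≠ 0) :
    a * ((a * b)⁻¹ * (b * S / C)) = S / C := by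
  rw [mul_inv]
  have : a * (a⁻¹ * b⁻¹ * (b * S / C)) = (a * a⁻¹) * ((b * b⁻¹) * (S / C)) := by ring
  rw [this, mul_inv_cancel₀ ha, mul_inv_cancel₀ hb, one_mul, one_mul]

lemma mean_eq {k : ℕ} (t : Fin (m+1) → ℝ) :
    ∑ ef : PermPair m k, ((Fintype.card (PermPair m k) : ℝ))⁻¹ • (fun i => t (bigSigma m k ef i)) =
      (fun i : Fin (m+1) => if (i:ℕ) ≤ k
        then (∑ j ∈ Finset.univ.filter (fun j : Fin (m+1) => (j:ℕ) ≤ k), t j) /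
          ((Finset.univ.filter (fun j : Fin (m+1) => (j:ℕ) ≤ k)).card : ℝ)
        else (∑ j ∈ Finset.univ.filter (fun j : Fin (m+1) => ¬((j:ℕ) ≤ k)), t j) /
          ((Finset.univ.filter (fun j : Fin (m+1) => ¬((j:ℕ) ≤ k))).card : ℝ)) := by
  have hN : (Fintype.card (PermPair m k) : ℝ) =
      (Fintype.card (Equiv.Perm {i : Fin (m+1) // (i:ℕ) ≤ k}) : ℝ) *
      (Fintype.card (Equiv.Perm {i : Fin (m+1) // ¬((i:ℕ) ≤ k)}) : ℝ) := by
    rw [Fintype.card_prod]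
    push_cast
    ring
  have hP1pos : 0 < (Fintype.card (Equiv.Perm {i : Fin (m+1) // (i:ℕ) ≤ k})) := Fintype.card_pos
  have hP2pos : 0 < (Fintype.card (Equiv.Perm {i : Fin (m+1) // ¬((i:ℕ) ≤ k)})) :=
    Fintype.card_pos
  funext i
  rw [Finset.sum_apply]
  simp only [Pi.smul_apply, smul_eq_mul]
  by_cases hi : (i:ℕ) ≤ k
  · rw [if_pos hi]
    have hα : Nonempty {j : Fin (m+1) // (j:ℕ) ≤ k} := ⟨⟨i, hi⟩⟩
    have hcardα : 0 < (Fintype.card {j : Fin (m+1) // (j:ℕ) ≤ k}) := Fintype.card_pos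
    have h1 : ∑ ef : PermPair m k,
        (Fintype.card (PermPair m k) : ℝ)⁻¹ * t (bigSigma m k ef i) =
        ∑ e : Equiv.Perm {j : Fin (m+1) // (j:ℕ) ≤ k},
          ∑ f : Equiv.Perm {j : Fin (m+1) // ¬((j:ℕ) ≤ k)},
            (Fintype.card (PermPair m k) : ℝ)⁻¹ * t ((e ⟨i, hi⟩).1) := by
      rw [Fintype.sum_prod_type]
      apply Finset.sum_congr rfl
      intro e _
      apply Finset.sum_congr rfl
      intro f _
      rw [bigSigma_apply_le (e, f) hi]
    rw [h1]
    have h2 : ∀ e : Equiv.Perm {j : Fin (m+1) // (j:ℕ) ≤ k},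
        ∑ _f : Equiv.Perm {j : Fin (m+1) // ¬((j:ℕ) ≤ k)},
          (Fintype.card (PermPair m k) : ℝ)⁻¹ * t ((e ⟨i, hi⟩).1) =
        (Fintype.card (Equiv.Perm {j : Fin (m+1) // ¬((j:ℕ) ≤ k)}) : ℝ) *
          ((Fintype.card (PermPair m k) : ℝ)⁻¹ * t ((e ⟨i, hi⟩).1)) := by
      intro e
      rw [Finset.sum_const, Finset.card_univ, nsmul_eq_mul]
    rw [Finset.sum_congr rfl (fun e _ => h2 e), ← Finset.mul_sum]
    have h3 := perm_sum_const (fun b : {j : Fin (m+1) // (j:ℕ) ≤ k} => t b.1) ⟨i, hi⟩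
    have h4 : ∑ e : Equiv.Perm {j : Fin (m+1) // (j:ℕ) ≤ k},
        (Fintype.card (PermPair m k) : ℝ)⁻¹ * t ((e ⟨i, hi⟩).1) =
        (Fintype.card (PermPair m k) : ℝ)⁻¹ *
          ∑ e : Equiv.Perm {j : Fin (m+1) // (j:ℕ) ≤ k}, t ((e ⟨i, hi⟩).1) := by
      rw [← Finset.mul_sum]
    rw [h4]
    have h5 : ∑ e : Equiv.Perm {j : Fin (m+1) // (j:ℕ) ≤ k}, t ((e ⟨i, hi⟩).1) =
        (Fintype.card (Equiv.Perm {j : Fin (m+1) // (j:ℕ) ≤ k}) : ℝ) *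
          (∑ b : {j : Fin (m+1) // (j:ℕ) ≤ k}, t b.1) /
          (Fintype.card {j : Fin (m+1) // (j:ℕ) ≤ k} : ℝ) := by
      have hcas : (Fintype.card {j : Fin (m+1) // (j:ℕ) ≤ k} : ℝ) ≠ 0 := by
        exact_mod_cast hcardα.ne'
      rw [eq_div_iff hcas]
      linear_combination h3
    rw [h5]
    have h6 : ∑ b : {j : Fin (m+1) // (j:ℕ) ≤ k}, t b.1 =
        ∑ j ∈ Finset.univ.filter (fun j : Fin (m+1) => (j:ℕ) ≤ k), t j := by
      rw [Finset.sum_subtype (p := fun j : Fin (m+1) => (j:ℕ) ≤ k)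
        (Finset.univ.filter (fun j : Fin (m+1) => (j:ℕ) ≤ k)) (by intro x; simp) t]
    have h7 : (Fintype.card {j : Fin (m+1) // (j:ℕ) ≤ k} : ℝ) =
        ((Finset.univ.filter (fun j : Fin (m+1) => (j:ℕ) ≤ k)).card : ℝ) := by
      rw [Fintype.card_subtype]
    rw [h6, ← h7, hN]
    have hp1 : (Fintype.card (Equiv.Perm {j : Fin (m+1) // (j:ℕ) ≤ k}) : ℝ) ≠ 0 := by
      exact_mod_cast hP1pos.ne'
    have hp2 : (Fintype.card (Equiv.Perm {j : Fin (m+1) // ¬((j:ℕ) ≤ k)}) : ℝ) ≠ 0 := by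
      exact_mod_cast hP2pos.ne'
    exact cancel_helper1 _ _ _ _ hp1 hp2
  · rw [if_neg hi]
    have hα : Nonempty {j : Fin (m+1) // ¬((j:ℕ) ≤ k)} := ⟨⟨i, hi⟩⟩
    have hcardα : 0 < (Fintype.card {j : Fin (m+1) // ¬((j:ℕ) ≤ k)}) := Fintype.card_pos
    have h1 : ∑ ef : PermPair m k,
        (Fintype.card (PermPair m k) : ℝ)⁻¹ * t (bigSigma m k ef i) =
        ∑ f : Equiv.Perm {j : Fin (m+1) // ¬((j:ℕ) ≤ k)},
          ∑ e : Equiv.Perm {j : Fin (m+1) // (j:ℕ) ≤ k},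
            (Fintype.card (PermPair m k) : ℝ)⁻¹ * t ((f ⟨i, hi⟩).1) := by
      rw [Fintype.sum_prod_type_right]
      apply Finset.sum_congr rfl
      intro f _
      apply Finset.sum_congr rfl
      intro e _
      rw [bigSigma_apply_gt (e, f) hi]
    rw [h1]
    have h2 : ∀ f : Equiv.Perm {j : Fin (m+1) // ¬((j:ℕ) ≤ k)},
        ∑ _e : Equiv.Perm {j : Fin (m+1) // (j:ℕ) ≤ k},
          (Fintype.card (PermPair m k) : ℝ)⁻¹ * t ((f ⟨i, hi⟩).1) =
        (Fintype.card (Equiv.Perm {j : Fin (m+1) // (j:ℕ) ≤ k}) : ℝ) *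
          ((Fintype.card (PermPair m k) : ℝ)⁻¹ * t ((f ⟨i, hi⟩).1)) := by
      intro f
      rw [Finset.sum_const, Finset.card_univ, nsmul_eq_mul]
    rw [Finset.sum_congr rfl (fun f _ => h2 f), ← Finset.mul_sum]
    have h3 := perm_sum_const (fun b : {j : Fin (m+1) // ¬((j:ℕ) ≤ k)} => t b.1) ⟨i, hi⟩
    have h4 : ∑ f : Equiv.Perm {j : Fin (m+1) // ¬((j:ℕ) ≤ k)},
        (Fintype.card (PermPair m k) : ℝ)⁻¹ * t ((f ⟨i, hi⟩).1) =
        (Fintype.card (PermPair m k) : ℝ)⁻¹ *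
          ∑ f : Equiv.Perm {j : Fin (m+1) // ¬((j:ℕ) ≤ k)}, t ((f ⟨i, hi⟩).1) := by
      rw [← Finset.mul_sum]
    rw [h4]
    have h5 : ∑ f : Equiv.Perm {j : Fin (m+1) // ¬((j:ℕ) ≤ k)}, t ((f ⟨i, hi⟩).1) =
        (Fintype.card (Equiv.Perm {j : Fin (m+1) // ¬((j:ℕ) ≤ k)}) : ℝ) *
          (∑ b : {j : Fin (m+1) // ¬((j:ℕ) ≤ k)}, t b.1) /
          (Fintype.card {j : Fin (m+1) // ¬((j:ℕ) ≤ k)} : ℝ) := by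
      have hcas : (Fintype.card {j : Fin (m+1) // ¬((j:ℕ) ≤ k)} : ℝ) ≠ 0 := by
        exact_mod_cast hcardα.ne'
      rw [eq_div_iff hcas]
      linear_combination h3
    rw [h5]
    have h6 : ∑ b : {j : Fin (m+1) // ¬((j:ℕ) ≤ k)}, t b.1 =
        ∑ j ∈ Finset.univ.filter (fun j : Fin (m+1) => ¬((j:ℕ) ≤ k)), t j := by
      rw [Finset.sum_subtype (p := fun j : Fin (m+1) => ¬((j:ℕ) ≤ k))
        (Finset.univ.filter (fun j : Fin (m+1) => ¬((j:ℕ) ≤ k))) (by intro x; simp) t]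
    have h7 : (Fintype.card {j : Fin (m+1) // ¬((j:ℕ) ≤ k)} : ℝ) =
        ((Finset.univ.filter (fun j : Fin (m+1) => ¬((j:ℕ) ≤ k))).card : ℝ) := by
      rw [Fintype.card_subtype]
    rw [h6, ← h7, hN]
    have hp1 : (Fintype.card (Equiv.Perm {j : Fin (m+1) // (j:ℕ) ≤ k}) : ℝ) ≠ 0 := by
      exact_mod_cast hP1pos.ne'
    have hp2 : (Fintype.card (Equiv.Perm {j : Fin (m+1) // ¬((j:ℕ) ≤ k)}) : ℝ) ≠ 0 := by
      exact_mod_cast hP2pos.ne'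
    exact cancel_helper2 _ _ _ _ hp1 hp2

lemma V_tbar_le {k : ℕ} (hsm : ContDiffOn ℝ (⊤ : ℕ∞) φ {z | z ≠ 0}) (hscal : ScalInv m φ)
    (hG : GInv m k φ) (hadm : Adm m φ) (tt : Fin (m+1) → ℝ) :
    Vfun m k φ (fun i : Fin (m+1) => if (i:ℕ) ≤ k
        then (∑ j ∈ Finset.univ.filter (fun j : Fin (m+1) => (j:ℕ) ≤ k), tt j) /
          ((Finset.univ.filter (fun j : Fin (m+1) => (j:ℕ) ≤ k)).card : ℝ)
        else (∑ j ∈ Finset.univ.filter (fun j : Fin (m+1) => ¬((j:ℕ) ≤ k)), tt j) /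
          ((Finset.univ.filter (fun j : Fin (m+1) => ¬((j:ℕ) ≤ k))).card : ℝ)) ≤
      Vfun m k φ tt := by
  have hconv := convexOn_Vfun hsm hscal hG hadm
  have hNpos : (0 : ℝ) < (Fintype.card (PermPair m k) : ℝ) := by
    exact_mod_cast (Fintype.card_pos : 0 < Fintype.card (PermPair m k))
  have hw : ∑ _ef : PermPair m k, (Fintype.card (PermPair m k) : ℝ)⁻¹ = 1 := by
    rw [Finset.sum_const, Finset.card_univ, nsmul_eq_mul, mul_inv_cancel₀ hNpos.ne']
  have hmap := hconv.map_sum_le (w := fun _ : PermPair m k => (Fintype.card (PermPair m k) : ℝ)⁻¹)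
    (p := fun ef : PermPair m k => (fun i => tt (bigSigma m k ef i)))
    (fun _ _ => by positivity) hw (fun _ _ => Set.mem_univ _)
  rw [mean_eq tt] at hmap
  have hrhs : ∑ ef : PermPair m k, (Fintype.card (PermPair m k) : ℝ)⁻¹ *
      Vfun m k φ (fun i => tt (bigSigma m k ef i)) = Vfun m k φ tt := by
    have : ∀ ef : PermPair m k, (Fintype.card (PermPair m k) : ℝ)⁻¹ *
        Vfun m k φ (fun i => tt (bigSigma m k ef i)) =
        (Fintype.card (PermPair m k) : ℝ)⁻¹ * Vfun m k φ tt := by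
      intro ef
      rw [Vfun_bigSigma hG ef tt]
    rw [Finset.sum_congr rfl (fun ef _ => this ef), ← Finset.sum_mul, hw, one_mul]
  simp only [smul_eq_mul] at hmap
  rw [hrhs] at hmap
  exact hmap

lemma Vfun_shift {k : ℕ} (hscal : ScalInv m φ)
    (hcard : (((Finset.univ.filter (fun i : Fin (m+1) => (i:ℕ) ≤ k)).card : ℕ) : ℝ) = (k:ℝ)+1)
    (tt : Fin (m+1) → ℝ) (c : ℝ) :
    Vfun m k φ (fun i => tt i + c) = Vfun m k φ tt := by
  unfold Vfun
  have harg : (fun j : Fin (m+1) => Complex.exp (((fun i => tt i + c) j : ℝ) : ℂ)) =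
      ((Real.exp c : ℂ)) • (fun j : Fin (m+1) => Complex.exp ((tt j : ℂ))) := by
    funext j
    simp only [Pi.smul_apply, smul_eq_mul]
    rw [Complex.ofReal_add, Complex.exp_add, Complex.ofReal_exp]
    ring
  rw [harg, Phi_smul hscal (Real.exp_pos c) (ecurve_ne_zero _), Real.log_exp]
  rw [Finset.sum_add_distrib, Finset.sum_const, nsmul_eq_mul, hcard]
  have hk1 : ((k:ℝ)+1) ≠ 0 := by positivity
  field_simp
  ring

lemma card_S1_eq {k : ℕ} (hkm : k ≤ m) :
    (Finset.univ.filter (fun i : Fin (m+1) => (i:ℕ) ≤ k)).card = k+1 := by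
  have hklt : k < m+1 := Nat.lt_succ_of_le hkm
  have heq : Finset.univ.filter (fun i : Fin (m+1) => (i:ℕ) ≤ k) =
      Finset.Iic (⟨k, hklt⟩ : Fin (m+1)) := by
    ext i
    simp [Finset.mem_Iic, Fin.le_def]
  rw [heq, Fin.card_Iic]

lemma card_S2_eq {k : ℕ} (hkm : k ≤ m) :
    (Finset.univ.filter (fun i : Fin (m+1) => ¬((i:ℕ) ≤ k))).card = m - k := by
  have h := Finset.card_filter_add_card_filter_not
    (s := (Finset.univ : Finset (Fin (m+1)))) (p := fun i : Fin (m+1) => (i:ℕ) ≤ k)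
  rw [card_S1_eq hkm, Finset.card_univ, Fintype.card_fin] at h
  omega

lemma psi1_exp {k : ℕ} (tt : Fin (m+1) → ℝ) :
    psi1 m k (fun j => Complex.exp ((tt j : ℂ))) =
      (2*((m:ℝ)+1)/((k:ℝ)+1)) *
        (∑ i ∈ Finset.univ.filter (fun i : Fin (m+1) => (i:ℕ) ≤ k), tt i) -
      ((m:ℝ)+1) * Real.log (nsq (fun j => Complex.exp ((tt j : ℂ)))) := by
  unfold psi1
  have hprod : (∏ i ∈ Finset.univ.filter (fun i : Fin (m+1) => (i:ℕ) ≤ k),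
      ‖Complex.exp ((tt i : ℂ))‖) =
      Real.exp (∑ i ∈ Finset.univ.filter (fun i : Fin (m+1) => (i:ℕ) ≤ k), tt i) := by
    rw [Real.exp_sum]
    apply Finset.prod_congr rfl
    intro i _
    rw [Complex.norm_exp]
    simp
  rw [hprod]
  rw [Real.log_div (Real.rpow_pos_of_pos (Real.exp_pos _) _).ne'
    (Real.rpow_pos_of_pos (nsq_pos (ecurve_ne_zero _)) _).ne']
  rw [Real.log_rpow (Real.exp_pos _), Real.log_rpow (nsq_pos (ecurve_ne_zero _)), Real.log_exp]

lemma psi2_exp {k : ℕ} (tt : Fin (m+1) → ℝ) :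
    psi2 m k (fun j => Complex.exp ((tt j : ℂ))) =
      (2*((m:ℝ)+1)/((m:ℝ)-(k:ℝ))) *
        (∑ i ∈ Finset.univ.filter (fun i : Fin (m+1) => k+1 ≤ (i:ℕ)), tt i) -
      ((m:ℝ)+1) * Real.log (nsq (fun j => Complex.exp ((tt j : ℂ)))) := by
  unfold psi2
  have hprod : (∏ i ∈ Finset.univ.filter (fun i : Fin (m+1) => k+1 ≤ (i:ℕ)),
      ‖Complex.exp ((tt i : ℂ))‖) =
      Real.exp (∑ i ∈ Finset.univ.filter (fun i : Fin (m+1) => k+1 ≤ (i:ℕ)), tt i) := by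
    rw [Real.exp_sum]
    apply Finset.prod_congr rfl
    intro i _
    rw [Complex.norm_exp]
    simp
  rw [hprod]
  rw [Real.log_div (Real.rpow_pos_of_pos (Real.exp_pos _) _).ne'
    (Real.rpow_pos_of_pos (nsq_pos (ecurve_ne_zero _)) _).ne']
  rw [Real.log_rpow (Real.exp_pos _), Real.log_rpow (nsq_pos (ecurve_ne_zero _)), Real.log_exp]

lemma phi_sub_psi1 {k : ℕ} (tt : Fin (m+1) → ℝ) :
    φ (fun j => Complex.exp ((tt j : ℂ))) - psi1 m k (fun j => Complex.exp ((tt j : ℂ))) =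
      Vfun m k φ tt := by
  rw [psi1_exp]
  unfold Vfun Phi
  ring

lemma min_shift' (a b : ℝ) : min a b = a + min 0 (b - a) := by
  rcases le_total a b with h | h
  · rw [min_eq_left h, min_eq_left (by linarith : (0:ℝ) ≤ b - a), add_zero]
  · rw [min_eq_right h, min_eq_right (by linarith : b - a ≤ 0)]
    ring

end Core

theorem stmt8 (m k : ℕ) (hm : 2 ≤ m) (hk : 1 ≤ k) (hkm : k ≤ m - 1)
    (φ : (Fin (m + 1) → ℂ) → ℝ)
    (hsm : ContDiffOn ℝ (⊤ : ℕ∞) φ {z : Fin (m + 1) → ℂ | z ≠ 0})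
    (hscal : ScalInv m φ) (hG : GInv m k φ) (hadm : Adm m φ)
    (x : Fin (m + 1) → ℝ) (hx : ∀ i, 0 < x i) :
    let A : Fin (m + 1) → ℂ := fun i => if i = 0 then 1 else (x i : ℂ)
    let νv : ℝ := (∏ i ∈ Finset.univ.filter (fun i : Fin (m + 1) => k + 1 ≤ (i : ℕ)), x i) ^
        (1 / ((m : ℝ) - (k : ℝ))) /
      (∏ i ∈ Finset.univ.filter (fun i : Fin (m + 1) => 1 ≤ (i : ℕ) ∧ (i : ℕ) ≤ k), x i) ^
        (1 / ((k : ℝ) + 1))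
    let B : Fin (m + 1) → ℂ := fun i => if (i : ℕ) ≤ k then 1 else (νv : ℂ)
    φ B - psi m k B ≤ φ A - psi m k A := by
  intro A νv B
  have hkm' : k < m := by omega
  have hk1 : ((k:ℝ)+1) ≠ 0 := by positivity
  have hmk0 : ((m:ℝ) - (k:ℝ)) ≠ 0 := by
    have : (k:ℝ) < (m:ℝ) := by exact_mod_cast hkm'
    linarith
  have hP1pos : 0 < ∏ i ∈ Finset.univ.filter
      (fun i : Fin (m + 1) => 1 ≤ (i : ℕ) ∧ (i : ℕ) ≤ k), x i :=
    Finset.prod_pos (fun i _ => hx i)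
  have hP2pos : 0 < ∏ i ∈ Finset.univ.filter
      (fun i : Fin (m + 1) => k + 1 ≤ (i : ℕ)), x i :=
    Finset.prod_pos (fun i _ => hx i)
  have hνdef : νv = (∏ i ∈ Finset.univ.filter (fun i : Fin (m + 1) => k + 1 ≤ (i : ℕ)), x i) ^
        (1 / ((m : ℝ) - (k : ℝ))) /
      (∏ i ∈ Finset.univ.filter (fun i : Fin (m + 1) => 1 ≤ (i : ℕ) ∧ (i : ℕ) ≤ k), x i) ^
        (1 / ((k : ℝ) + 1)) := rfl
  have hνpos : 0 < νv := by
    rw [hνdef]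
    exact div_pos (Real.rpow_pos_of_pos hP2pos _) (Real.rpow_pos_of_pos hP1pos _)
  set tA : Fin (m+1) → ℝ := fun i => if i = 0 then 0 else Real.log (x i) with htA
  set tB : Fin (m+1) → ℝ := fun i => if (i:ℕ) ≤ k then 0 else Real.log νv with htB
  have hA : A = fun j => Complex.exp ((tA j : ℂ)) := by
    funext j
    show (if j = 0 then (1:ℂ) else (x j : ℂ)) = Complex.exp ((tA j : ℂ))
    by_cases hj : j = 0
    · rw [if_pos hj]
      simp [htA, hj]
    · rw [if_neg hj]
      simp only [htA, if_neg hj]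
      rw [← Complex.ofReal_exp, Real.exp_log (hx j)]
  have hB : B = fun j => Complex.exp ((tB j : ℂ)) := by
    funext j
    show (if (j:ℕ) ≤ k then (1:ℂ) else (νv : ℂ)) = Complex.exp ((tB j : ℂ))
    by_cases hj : (j:ℕ) ≤ k
    · rw [if_pos hj]
      simp [htB, hj]
    · rw [if_neg hj]
      simp only [htB, if_neg hj]
      rw [← Complex.ofReal_exp, Real.exp_log hνpos]
  have hS2eq : Finset.univ.filter (fun i : Fin (m+1) => ¬((i:ℕ) ≤ k)) =
      Finset.univ.filter (fun i : Fin (m+1) => k + 1 ≤ (i:ℕ)) := by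
    ext i
    simp only [Finset.mem_filter, Finset.mem_univ, true_and]
    omega
  have hcard1R : (((Finset.univ.filter (fun i : Fin (m+1) => (i:ℕ) ≤ k)).card : ℕ) : ℝ) =
      (k:ℝ)+1 := by
    rw [card_S1_eq hkm'.le]
    push_cast
    ring
  have hcard2R : (((Finset.univ.filter (fun i : Fin (m+1) => ¬((i:ℕ) ≤ k))).card : ℕ) : ℝ) =
      (m:ℝ) - (k:ℝ) := by
    rw [card_S2_eq hkm'.le, Nat.cast_sub hkm'.le]
  have hSA1 : (∑ i ∈ Finset.univ.filter (fun i : Fin (m+1) => (i:ℕ) ≤ k), tA i) =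
      Real.log (∏ i ∈ Finset.univ.filter
        (fun i : Fin (m + 1) => 1 ≤ (i : ℕ) ∧ (i : ℕ) ≤ k), x i) := by
    have h0mem : (0 : Fin (m+1)) ∈ Finset.univ.filter (fun i : Fin (m+1) => (i:ℕ) ≤ k) := by
      simp
    rw [← Finset.sum_erase_add _ _ h0mem]
    have ht0 : tA 0 = 0 := by simp [htA]
    rw [ht0, add_zero]
    have herase : (Finset.univ.filter (fun i : Fin (m+1) => (i:ℕ) ≤ k)).erase 0 =
        Finset.univ.filter (fun i : Fin (m + 1) => 1 ≤ (i : ℕ) ∧ (i : ℕ) ≤ k) := by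
      ext i
      simp only [Finset.mem_erase, Finset.mem_filter, Finset.mem_univ, true_and]
      constructor
      · rintro ⟨hne, hle⟩
        refine ⟨?_, hle⟩
        by_contra hcon
        push_neg at hcon
        have hi0 : (i:ℕ) = 0 := by omega
        exact hne (Fin.ext (by simpa using hi0))
      · rintro ⟨h1, hle⟩
        refine ⟨?_, hle⟩
        intro h
        rw [h] at h1
        simp at h1
    rw [herase, Real.log_prod (fun i _ => (hx i).ne')]
    apply Finset.sum_congr rfl
    intro i hi
    simp only [Finset.mem_filter, Finset.mem_univ, true_and] at hi
    have hne : i ≠ 0 := by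
      intro h
      rw [h] at hi
      simp at hi
    simp [htA, hne]
  have hSA2 : (∑ i ∈ Finset.univ.filter (fun i : Fin (m+1) => ¬((i:ℕ) ≤ k)), tA i) =
      Real.log (∏ i ∈ Finset.univ.filter (fun i : Fin (m + 1) => k + 1 ≤ (i : ℕ)), x i) := by
    rw [hS2eq, Real.log_prod (fun i _ => (hx i).ne')]
    apply Finset.sum_congr rfl
    intro i hi
    simp only [Finset.mem_filter, Finset.mem_univ, true_and] at hi
    have hne : i ≠ 0 := by
      intro h
      rw [h] at hi
      simp at hi
    simp [htA, hne]
  have hSB1 : (∑ i ∈ Finset.univ.filter (fun i : Fin (m+1) => (i:ℕ) ≤ k), tB i) = 0 := by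
    apply Finset.sum_eq_zero
    intro i hi
    simp only [Finset.mem_filter, Finset.mem_univ, true_and] at hi
    simp [htB, hi]
  have hSB2 : (∑ i ∈ Finset.univ.filter (fun i : Fin (m+1) => ¬((i:ℕ) ≤ k)), tB i) =
      ((m:ℝ) - (k:ℝ)) * Real.log νv := by
    have : ∀ i ∈ Finset.univ.filter (fun i : Fin (m+1) => ¬((i:ℕ) ≤ k)), tB i = Real.log νv := by
      intro i hi
      simp only [Finset.mem_filter, Finset.mem_univ, true_and] at hi
      simp [htB, hi]
    rw [Finset.sum_congr rfl this, Finset.sum_const, nsmul_eq_mul, hcard2R]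
  have hlogν : Real.log νv =
      Real.log (∏ i ∈ Finset.univ.filter (fun i : Fin (m + 1) => k + 1 ≤ (i : ℕ)), x i) /
        ((m:ℝ) - (k:ℝ)) -
      Real.log (∏ i ∈ Finset.univ.filter
        (fun i : Fin (m + 1) => 1 ≤ (i : ℕ) ∧ (i : ℕ) ≤ k), x i) / ((k:ℝ)+1) := by
    rw [hνdef, Real.log_div (Real.rpow_pos_of_pos hP2pos _).ne'
      (Real.rpow_pos_of_pos hP1pos _).ne',
      Real.log_rpow hP2pos, Real.log_rpow hP1pos]
    ring
  -- the main convexity inequality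
  have hVBA : Vfun m k φ tB ≤ Vfun m k φ tA := by
    have hmean := V_tbar_le hsm hscal hG hadm tA
    have hpt : (fun i : Fin (m+1) => if (i:ℕ) ≤ k
        then (∑ j ∈ Finset.univ.filter (fun j : Fin (m+1) => (j:ℕ) ≤ k), tA j) /
          ((Finset.univ.filter (fun j : Fin (m+1) => (j:ℕ) ≤ k)).card : ℝ)
        else (∑ j ∈ Finset.univ.filter (fun j : Fin (m+1) => ¬((j:ℕ) ≤ k)), tA j) /
          ((Finset.univ.filter (fun j : Fin (m+1) => ¬((j:ℕ) ≤ k))).card : ℝ)) =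
        (fun i => tB i + Real.log (∏ i ∈ Finset.univ.filter
          (fun i : Fin (m + 1) => 1 ≤ (i : ℕ) ∧ (i : ℕ) ≤ k), x i) / ((k:ℝ)+1)) := by
      funext i
      by_cases hi : (i:ℕ) ≤ k
      · rw [if_pos hi]
        simp only [htB, if_pos hi]
        rw [hSA1, hcard1R, zero_add]
      · rw [if_neg hi]
        simp only [htB, if_neg hi]
        rw [hSA2, hcard2R, hlogν]
        ring
    rw [hpt, Vfun_shift hscal hcard1R tB _] at hmean
    exact hmean
  -- translate to the goal
  rw [hA, hB]
  have hWA := phi_sub_psi1 (φ := φ) (m := m) (k := k) tA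
  have hWB := phi_sub_psi1 (φ := φ) (m := m) (k := k) tB
  have hdd : psi2 m k (fun j => Complex.exp ((tB j : ℂ))) -
      psi1 m k (fun j => Complex.exp ((tB j : ℂ))) =
      psi2 m k (fun j => Complex.exp ((tA j : ℂ))) -
      psi1 m k (fun j => Complex.exp ((tA j : ℂ))) := by
    rw [psi1_exp tA, psi2_exp tA, psi1_exp tB, psi2_exp tB, ← hS2eq, hSA1, hSA2, hSB1, hSB2,
      hlogν]
    field_simp
    ring
  show φ (fun j => Complex.exp ((tB j : ℂ))) -
      psi m k (fun j => Complex.exp ((tB j : ℂ))) ≤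
      φ (fun j => Complex.exp ((tA j : ℂ))) - psi m k (fun j => Complex.exp ((tA j : ℂ)))
  unfold psi
  rw [min_shift' (psi1 m k (fun j => Complex.exp ((tB j : ℂ))))
      (psi2 m k (fun j => Complex.exp ((tB j : ℂ)))),
    min_shift' (psi1 m k (fun j => Complex.exp ((tA j : ℂ))))
      (psi2 m k (fun j => Complex.exp ((tA j : ℂ)))), hdd]
  linarith [hVBA, hWA, hWB]
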